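/- Gronwall-like inequality for frequency-indexed families: Fix x ∈ ℕ. Let u, A, b, c : ℕ × [0,1] → [0,∞) be functions such that for all k ≥ x and all τ ∈ (0,1]: u(k,τ) ≤ A(k,τ) + b(k) ∫_τ^1 Σ_{l=x}^{k−1} c(l,τ′) u(l,τ′) dτ′. Then for all k ≥ x and all τ ∈ (0,1]: u(k,τ) ≤ A(k,τ) + b(k) ∫_τ^1 Σ_{l=x}^{k−1} c(l,τ′) A(l,τ′) Π_{j=l+1}^{k−1} ( 1 + ∫_τ^{τ′} b(j) c(j,τ″) dτ″ ) dτ′. -/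
import Mathlib


set_option autoImplicit false
set_option maxHeartbeats 1000000

open MeasureTheory

/-- Fubini on a triangle for interval integrals of products. -/
lemma fubini_triangle {f g : ℝ → ℝ} {a b : ℝ} (hab : a ≤ b)
    (hf : IntervalIntegrable f volume a b) (hg : IntervalIntegrable g volume a b) :
    (∫ t in a..b, f t * ∫ s in t..b, g s) = ∫ s in a..b, (∫ t in a..s, f t) * g s := by
  set μ := volume.restrict (Set.Ioc a b) with hμ
  have hf' : Integrable f μ := by
    have := hf.def'; rwa [Set.uIoc_of_le hab] at this
  have hg' : Integrable g μ := by
    have := hg.def'; rwa [Set.uIoc_of_le hab] at this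
  set S : Set (ℝ × ℝ) := {p : ℝ × ℝ | p.1 ≤ p.2} with hS
  have hSmeas : MeasurableSet S := measurableSet_le measurable_fst measurable_snd
  set F : ℝ × ℝ → ℝ := S.indicator (fun p => f p.1 * g p.2) with hF
  have hFint : Integrable F (μ.prod μ) := (hf'.mul_prod hg').indicator hSmeas
  have swap : (∫ t, ∫ s, F (t, s) ∂μ ∂μ) = ∫ s, ∫ t, F (t, s) ∂μ ∂μ :=
    integral_integral_swap hFint
  have h1 : (∫ t, ∫ s, F (t, s) ∂μ ∂μ) = ∫ t in a..b, f t * ∫ s in t..b, g s := by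
    rw [intervalIntegral.integral_of_le hab, hμ]
    apply setIntegral_congr_fun measurableSet_Ioc
    intro t ht
    show (∫ s in Set.Ioc a b, F (t, s)) = f t * ∫ s in t..b, g s
    have : (fun s => F (t, s)) = (Set.Ici t).indicator (fun s => f t * g s) := by
      funext s
      by_cases h : t ≤ s <;> simp [hF, hS, Set.indicator, h]
    rw [this, setIntegral_indicator measurableSet_Ici]
    have hset : Set.Ioc a b ∩ Set.Ici t = Set.Icc t b := by
      ext s; constructor
      · rintro ⟨⟨_, h2⟩, h3⟩; exact ⟨h3, h2⟩
      · rintro ⟨h1, h2⟩; exact ⟨⟨lt_of_lt_of_le ht.1 h1, h2⟩, h1⟩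
    rw [hset, integral_Icc_eq_integral_Ioc, ← intervalIntegral.integral_of_le ht.2,
      intervalIntegral.integral_const_mul]
  have h2 : (∫ s, ∫ t, F (t, s) ∂μ ∂μ) = ∫ s in a..b, (∫ t in a..s, f t) * g s := by
    rw [intervalIntegral.integral_of_le hab, hμ]
    apply setIntegral_congr_fun measurableSet_Ioc
    intro s hs
    show (∫ t in Set.Ioc a b, F (t, s)) = (∫ t in a..s, f t) * g s
    have : (fun t => F (t, s)) = (Set.Iic s).indicator (fun t => f t * g s) := by
      funext t
      by_cases h : t ≤ s <;> simp [hF, hS, Set.indicator, h]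
    rw [this, setIntegral_indicator measurableSet_Iic]
    have hset : Set.Ioc a b ∩ Set.Iic s = Set.Ioc a s := by
      ext t; constructor
      · rintro ⟨⟨h1, _⟩, h3⟩; exact ⟨h1, h3⟩
      · rintro ⟨h1, h2⟩; exact ⟨⟨h1, le_trans h2 hs.2⟩, h2⟩
    rw [hset, ← intervalIntegral.integral_of_le hs.1.le,
      intervalIntegral.integral_mul_const]
  rw [← h1, ← h2] at *
  exact swap

/-- The integrand appearing on the right-hand side of the Gronwall-like inequality. -/
noncomputable def gronGG (A : ℕ → ℝ → ℝ) (b : ℕ → ℝ) (c : ℕ → ℝ → ℝ) (x k : ℕ)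
    (τ s : ℝ) : ℝ :=
  ∑ l ∈ Finset.Ico x k, c l s * A l s *
    ∏ j ∈ Finset.Ico (l + 1) k, (1 + ∫ τ'' in τ..s, b j * c j τ'')

section AuxLemmas

variable {A : ℕ → ℝ → ℝ} {b : ℕ → ℝ} {c : ℕ → ℝ → ℝ} {x : ℕ}

lemma intervalIntegrable_sum' {ι : Type*} (s : Finset ι) {f : ι → ℝ → ℝ} {a b : ℝ}
    (h : ∀ i ∈ s, IntervalIntegrable (f i) volume a b) :
    IntervalIntegrable (fun t => ∑ i ∈ s, f i t) volume a b := by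
  have h2 := IntervalIntegrable.sum s h
  have heq : (∑ i ∈ s, f i) = fun t => ∑ i ∈ s, f i t := by
    funext t; simp
  rwa [heq] at h2

lemma gronGG_prod_continuousOn
    (hcInt : ∀ l, ∀ τ ∈ Set.Ioc (0 : ℝ) 1, IntervalIntegrable (c l) volume τ 1)
    {τ : ℝ} (hτ : τ ∈ Set.Ioc (0 : ℝ) 1) (l k : ℕ) :
    ContinuousOn (fun s => ∏ j ∈ Finset.Ico (l + 1) k,
      (1 + ∫ τ'' in τ..s, b j * c j τ'')) (Set.uIcc τ 1) := by
  apply continuousOn_finset_prod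
  intro j _
  exact continuousOn_const.add
    (intervalIntegral.continuousOn_primitive_interval'
      ((hcInt j τ hτ).const_mul (b j)) Set.left_mem_uIcc)

lemma gronGG_intervalIntegrable
    (hcA : ∀ l, ∀ τ ∈ Set.Ioc (0 : ℝ) 1,
      IntervalIntegrable (fun τ' => c l τ' * A l τ') volume τ 1)
    (hcInt : ∀ l, ∀ τ ∈ Set.Ioc (0 : ℝ) 1, IntervalIntegrable (c l) volume τ 1)
    {τ : ℝ} (hτ : τ ∈ Set.Ioc (0 : ℝ) 1) (k : ℕ) :
    IntervalIntegrable (fun s => gronGG A b c x k τ s) volume τ 1 := by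
  unfold gronGG
  apply intervalIntegrable_sum'
  intro l _
  exact (hcA l τ hτ).mul_continuousOn (gronGG_prod_continuousOn hcInt hτ l k)

end AuxLemmas

/-- **Gronwall-like inequality for frequency-indexed families** (Lemma 4.9 of the paper).
Fix `x ∈ ℕ`.  Let `u, A, b, c` be nonnegative functions (with `b` depending only on the
frequency index) such that for all `k ≥ x` and all `τ ∈ (0,1]`,
`u(k,τ) ≤ A(k,τ) + b(k) ∫_τ^1 Σ_{l=x}^{k−1} c(l,τ') u(l,τ') dτ'`.
Then for all `k ≥ x` and all `τ ∈ (0,1]`,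
`u(k,τ) ≤ A(k,τ) + b(k) ∫_τ^1 Σ_{l=x}^{k−1} c(l,τ') A(l,τ')
   Π_{j=l+1}^{k−1} (1 + ∫_τ^{τ'} b(j) c(j,τ'') dτ'') dτ'`.
Sums over an empty range are `0` and products over an empty range are `1`. -/
theorem gronwall_like_inequality (x : ℕ) (u A : ℕ → ℝ → ℝ) (b : ℕ → ℝ) (c : ℕ → ℝ → ℝ)
    (hu : ∀ k τ, 0 ≤ u k τ) (hA : ∀ k τ, 0 ≤ A k τ)
    (hb : ∀ k, 0 ≤ b k) (hc : ∀ k τ, 0 ≤ c k τ)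
    (hcu : ∀ l, ∀ τ ∈ Set.Ioc (0 : ℝ) 1,
      IntervalIntegrable (fun τ' => c l τ' * u l τ') volume τ 1)
    (hcA : ∀ l, ∀ τ ∈ Set.Ioc (0 : ℝ) 1,
      IntervalIntegrable (fun τ' => c l τ' * A l τ') volume τ 1)
    (hcInt : ∀ l, ∀ τ ∈ Set.Ioc (0 : ℝ) 1, IntervalIntegrable (c l) volume τ 1)
    (hmain : ∀ k, x ≤ k → ∀ τ ∈ Set.Ioc (0 : ℝ) 1,
      u k τ ≤ A k τ + b k * ∫ τ' in τ..1, ∑ l ∈ Finset.Ico x k, c l τ' * u l τ') :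
    ∀ k, x ≤ k → ∀ τ ∈ Set.Ioc (0 : ℝ) 1,
      u k τ ≤ A k τ + b k * ∫ τ' in τ..1, ∑ l ∈ Finset.Ico x k,
        c l τ' * A l τ' * ∏ j ∈ Finset.Ico (l + 1) k, (1 + ∫ τ'' in τ..τ', b j * c j τ'') := by
  have key : ∀ k, x ≤ k → ∀ τ ∈ Set.Ioc (0 : ℝ) 1,
      (∫ τ' in τ..1, ∑ l ∈ Finset.Ico x k, c l τ' * u l τ')
        ≤ ∫ τ' in τ..1, gronGG A b c x k τ τ' := by
    intro k hk
    induction k, hk using Nat.le_induction with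
    | base => intro τ _; simp [gronGG]
    | succ k hk IH =>
      intro τ hτ
      obtain ⟨hτ0, hτ1⟩ := hτ
      have hτIoc : τ ∈ Set.Ioc (0 : ℝ) 1 := ⟨hτ0, hτ1⟩
      have hsub : Set.Icc τ 1 ⊆ Set.Ioc (0 : ℝ) 1 :=
        fun s hs => ⟨lt_of_lt_of_le hτ0 hs.1, hs.2⟩
      have huIcc : Set.uIcc τ 1 = Set.Icc τ 1 := Set.uIcc_of_le hτ1
      -- integrability facts
      have isum : IntervalIntegrable
          (fun τ' => ∑ l ∈ Finset.Ico x k, c l τ' * u l τ') volume τ 1 :=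
        intervalIntegrable_sum' _ fun l _ => hcu l τ hτIoc
      have icku : IntervalIntegrable (fun τ' => c k τ' * u k τ') volume τ 1 := hcu k τ hτIoc
      have hgI : IntervalIntegrable (fun s => gronGG A b c x k τ s) volume τ 1 :=
        gronGG_intervalIntegrable hcA hcInt hτIoc k
      -- `H` is the integral of `gronGG k τ` from `τ'` to `1`
      set H : ℝ → ℝ := fun τ' => ∫ s in τ'..1, gronGG A b c x k τ s with hH
      have hgIcc : IntegrableOn (fun s => gronGG A b c x k τ s) (Set.Icc τ 1) volume := by
        have h0 : IntegrableOn (fun s => gronGG A b c x k τ s) (Set.Ioc τ 1) volume := by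
          have := hgI.def'; rwa [Set.uIoc_of_le hτ1] at this
        exact h0.congr_set_ae Ioc_ae_eq_Icc.symm
      have hHcont : ContinuousOn H (Set.Icc τ 1) := by
        have := intervalIntegral.continuousOn_primitive_interval_left
          (μ := volume) (f := fun s => gronGG A b c x k τ s) (a := τ) (b := 1)
          (by rwa [huIcc])
        rwa [huIcc] at this
      -- split off the top term
      have step1 : (∫ τ' in τ..1, ∑ l ∈ Finset.Ico x (k + 1), c l τ' * u l τ')
          = (∫ τ' in τ..1, ∑ l ∈ Finset.Ico x k, c l τ' * u l τ')
            + ∫ τ' in τ..1, c k τ' * u k τ' := by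
        rw [← intervalIntegral.integral_add isum icku]
        simp only [Finset.sum_Ico_succ_top hk]
      -- pointwise estimate for the top term
      have pw : ∀ τ' ∈ Set.Icc τ 1,
          c k τ' * u k τ' ≤ c k τ' * A k τ' + c k τ' * (b k * H τ') := by
        intro τ' hτ'
        have hτ'I : τ' ∈ Set.Ioc (0 : ℝ) 1 := hsub hτ'
        have h1 : u k τ' ≤ A k τ' + b k *
            ∫ s in τ'..1, ∑ l ∈ Finset.Ico x k, c l s * u l s := hmain k hk τ' hτ'I
        have h2 : (∫ s in τ'..1, ∑ l ∈ Finset.Ico x k, c l s * u l s)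
            ≤ ∫ s in τ'..1, gronGG A b c x k τ' s := IH τ' hτ'I
        have h3 : (∫ s in τ'..1, gronGG A b c x k τ' s) ≤ H τ' := by
          apply intervalIntegral.integral_mono_on hτ'.2
            (gronGG_intervalIntegrable hcA hcInt hτ'I k)
            (hgI.mono_set (by
              rw [huIcc, Set.uIcc_of_le hτ'.2]
              exact Set.Icc_subset_Icc_left hτ'.1))
          intro s hs
          unfold gronGG
          apply Finset.sum_le_sum
          intro l _
          apply mul_le_mul_of_nonneg_left _ (mul_nonneg (hc l s) (hA l s))
          apply Finset.prod_le_prod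
          · intro j _
            have h0 : (0:ℝ) ≤ ∫ τ'' in τ'..s, b j * c j τ'' :=
              intervalIntegral.integral_nonneg hs.1 fun t _ => mul_nonneg (hb j) (hc j t)
            linarith
          · intro j _
            have hmono : (∫ τ'' in τ'..s, b j * c j τ'')
                ≤ ∫ τ'' in τ..s, b j * c j τ'' := by
              apply intervalIntegral.integral_mono_interval hτ'.1 hs.1 le_rfl
                (Filter.Eventually.of_forall fun t => mul_nonneg (hb j) (hc j t))
              exact ((hcInt j τ hτIoc).const_mul (b j)).mono_set
                (by
                  rw [huIcc, Set.uIcc_of_le (le_trans hτ'.1 hs.1)]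
                  exact Set.Icc_subset_Icc le_rfl hs.2)
            linarith
        have hF_le : u k τ' ≤ A k τ' + b k * H τ' := by
          have := mul_le_mul_of_nonneg_left (h2.trans h3) (hb k)
          linarith
        calc c k τ' * u k τ' ≤ c k τ' * (A k τ' + b k * H τ') :=
              mul_le_mul_of_nonneg_left hF_le (hc k τ')
          _ = c k τ' * A k τ' + c k τ' * (b k * H τ') := by ring
      -- integrability of the majorant
      have intRHS1 : IntervalIntegrable (fun τ' => c k τ' * A k τ') volume τ 1 := hcA k τ hτIoc
      have intRHS2 : IntervalIntegrable (fun τ' => c k τ' * (b k * H τ')) volume τ 1 :=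
        (hcInt k τ hτIoc).mul_continuousOn (by
          rw [huIcc]; exact continuousOn_const.mul hHcont)
      have step2 : (∫ τ' in τ..1, c k τ' * u k τ')
          ≤ (∫ τ' in τ..1, c k τ' * A k τ') + ∫ τ' in τ..1, c k τ' * (b k * H τ') := by
        calc (∫ τ' in τ..1, c k τ' * u k τ')
            ≤ ∫ τ' in τ..1, (c k τ' * A k τ' + c k τ' * (b k * H τ')) :=
              intervalIntegral.integral_mono_on hτ1 icku (intRHS1.add intRHS2) pw
          _ = _ := intervalIntegral.integral_add intRHS1 intRHS2
      -- Fubini step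
      have fub : (∫ τ' in τ..1, c k τ' * (b k * H τ'))
          = ∫ s in τ..1, (∫ t in τ..s, b k * c k t) * gronGG A b c x k τ s := by
        have hfu := fubini_triangle hτ1 ((hcInt k τ hτIoc).const_mul (b k)) hgI
        rw [← hfu]
        apply intervalIntegral.integral_congr
        intro t _
        show c k t * (b k * H t) = (b k * c k t) * ∫ s in t..1, gronGG A b c x k τ s
        rw [hH]; ring
      -- the recursion identity for `gronGG`
      have recid : ∀ s, gronGG A b c x (k + 1) τ s
          = gronGG A b c x k τ s + (c k s * A k s
            + (∫ t in τ..s, b k * c k t) * gronGG A b c x k τ s) := by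
        intro s
        unfold gronGG
        rw [Finset.sum_Ico_succ_top hk]
        have hterm : ∀ l ∈ Finset.Ico x k,
            c l s * A l s * ∏ j ∈ Finset.Ico (l + 1) (k + 1), (1 + ∫ τ'' in τ..s, b j * c j τ'')
            = c l s * A l s * ∏ j ∈ Finset.Ico (l + 1) k, (1 + ∫ τ'' in τ..s, b j * c j τ'')
              + (∫ t in τ..s, b k * c k t) *
                (c l s * A l s * ∏ j ∈ Finset.Ico (l + 1) k, (1 + ∫ τ'' in τ..s, b j * c j τ'')) := by
          intro l hl
          rw [Finset.prod_Ico_succ_top (Nat.succ_le_of_lt (Finset.mem_Ico.mp hl).2)]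
          ring
        rw [Finset.sum_congr rfl hterm, Finset.sum_add_distrib, ← Finset.mul_sum]
        simp [Finset.Ico_self]
        ring
      -- combine
      have iBg : IntervalIntegrable
          (fun s => (∫ t in τ..s, b k * c k t) * gronGG A b c x k τ s) volume τ 1 :=
        hgI.continuousOn_mul
          (intervalIntegral.continuousOn_primitive_interval'
            ((hcInt k τ hτIoc).const_mul (b k)) Set.left_mem_uIcc)
      have step3 : (∫ τ' in τ..1, gronGG A b c x k τ τ')
            + ((∫ τ' in τ..1, c k τ' * A k τ')
              + ∫ s in τ..1, (∫ t in τ..s, b k * c k t) * gronGG A b c x k τ s)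
          = ∫ τ' in τ..1, gronGG A b c x (k + 1) τ τ' := by
        rw [← intervalIntegral.integral_add intRHS1 iBg,
          ← intervalIntegral.integral_add hgI (intRHS1.add iBg)]
        simp only [recid]
      calc (∫ τ' in τ..1, ∑ l ∈ Finset.Ico x (k + 1), c l τ' * u l τ')
          = (∫ τ' in τ..1, ∑ l ∈ Finset.Ico x k, c l τ' * u l τ')
            + ∫ τ' in τ..1, c k τ' * u k τ' := step1
        _ ≤ (∫ τ' in τ..1, gronGG A b c x k τ τ')
            + ((∫ τ' in τ..1, c k τ' * A k τ') + ∫ τ' in τ..1, c k τ' * (b k * H τ')) := by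
            have := IH τ hτIoc; linarith
        _ = (∫ τ' in τ..1, gronGG A b c x k τ τ')
            + ((∫ τ' in τ..1, c k τ' * A k τ')
              + ∫ s in τ..1, (∫ t in τ..s, b k * c k t) * gronGG A b c x k τ s) := by
            rw [fub]
        _ = ∫ τ' in τ..1, gronGG A b c x (k + 1) τ τ' := step3
  intro k hk τ hτ
  have h1 := hmain k hk τ hτ
  have h2 := mul_le_mul_of_nonneg_left (key k hk τ hτ) (hb k)
  show u k τ ≤ A k τ + b k * ∫ τ' in τ..1, gronGG A b c x k τ τ'
  linarith
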